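/- arXiv:2510.27290 — 2 statements merged into one kernel-verified Lean document; each statement's English description precedes it below -/
import Mathlib

section
/- Let 𝔟 ≥ 1 and let Y ⊆ 𝔟^ℤ be the subshift of finite type described by forbidden patterns p_1,…,p_k. Then there exists a Borel equivariant map from F(2^ℤ) to Y if and only if there exists a continuous equivariant map from F(2^ℤ) to Y. -/
/-- The shift action of `ℤ` on `α^ℤ`: `(s · x)(n) = x(n + s)`. -/
def shift {α : Type*} (s : ℤ) (x : ℤ → α) : ℤ → α := fun n => x (n + s)

/-- The free part `F(2^ℤ)` of the shift action on `2^ℤ = (ℤ → Bool)`. -/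
def FreePart : Set (ℤ → Bool) := {x | ∀ s : ℤ, s ≠ 0 → shift s x ≠ x}

/-- The pattern `p` (of length `L`) occurs in `y ∈ b^ℤ`. -/
def Occurs {b L : ℕ} (p : Fin L → Fin b) (y : ℤ → Fin b) : Prop :=
  ∃ m : ℤ, ∀ i : Fin L, y (m + (i : ℤ)) = p i

/-- The subshift of finite type described by `(b; P 0, …, P (k-1))`:
the set of points of `b^ℤ` in which none of the forbidden patterns occurs. -/
def SFT {b L k : ℕ} (P : Fin k → Fin L → Fin b) : Set (ℤ → Fin b) :=
  {y | ∀ j : Fin k, ¬ Occurs (P j) y}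

/-- `f : F(2^ℤ) → Y` is equivariant: `f(s · x) = s · f(x)`. -/
def EquivariantOn {b : ℕ} (Y : Set (ℤ → Fin b))
    (f : {x : ℤ → Bool // x ∈ FreePart} → {y : ℤ → Fin b // y ∈ Y}) : Prop :=
  ∀ (x : {x : ℤ → Bool // x ∈ FreePart}) (s : ℤ) (h : shift s x.1 ∈ FreePart),
    (f ⟨shift s x.1, h⟩ : ℤ → Fin b) = shift s (f x : ℤ → Fin b)

/-!
A continuous map is Borel, so only the converse needs an argument.

Borel sets have the Baire property, so the coordinates of a Borel equivariant `f` agree with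
locally constant functions off a meagre set. Generic points are free and have each of their
windows `[-R, R]` recurring at two coprime shifts `g` and `h`; for such a generic `x`, equivariance
makes the first `L` symbols of `y = f x` recur at `g` and `h` too.

From such a `y` one builds a continuous equivariant map. Markers chosen greedily along a clopen
basis cut every free orbit into gaps longer than `g * h`; each gap is tiled by tiles of lengths
`g` and `h` (Frobenius), and each tile is filled with the beginning of `y`. Since the first `L`
symbols of `y` are `g`- and `h`-periodic, every word of length `L` in the result is a word of `y`,
so no forbidden pattern occurs.
-/

open Topology Filter Set

section Shift

variable {α : Type*}

theorem shift_shift (a b : ℤ) (x : ℤ → α) : shift a (shift b x) = shift (b + a) x := by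
  funext n
  simp only [shift, add_assoc, add_comm a b]

@[simp]
theorem shift_zero (x : ℤ → α) : shift 0 x = x := by
  funext n
  simp [shift]

theorem shift_mem_freePart {x : ℤ → Bool} (hx : x ∈ FreePart) (s : ℤ) : shift s x ∈ FreePart := by
  intro t ht hfix
  apply hx t ht
  have := congrArg (shift (-s)) hfix
  rwa [shift_shift, shift_shift, shift_shift, add_neg_cancel_comm_assoc, add_neg_cancel,
    shift_zero] at this

variable [TopologicalSpace α]

theorem continuous_shift (s : ℤ) : Continuous (shift s : (ℤ → α) → ℤ → α) :=
  continuous_pi fun n => continuous_apply (n + s)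

def shiftHomeomorph (s : ℤ) : (ℤ → α) ≃ₜ (ℤ → α) where
  toFun := shift s
  invFun := shift (-s)
  left_inv x := by rw [shift_shift, add_neg_cancel, shift_zero]
  right_inv x := by rw [shift_shift, neg_add_cancel, shift_zero]
  continuous_toFun := continuous_shift s
  continuous_invFun := continuous_shift (-s)

theorem Filter.Eventually.comp_shift {p : (ℤ → α) → Prop} (hp : ∀ᶠ x in residual (ℤ → α), p x)
    (s : ℤ) : ∀ᶠ x in residual (ℤ → α), p (shift s x) := by
  rw [← (shiftHomeomorph s).residual_map_eq] at hp
  exact eventually_map.1 hp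

end Shift

section Cylinder

variable {α : Type*}

def cylinder (x : ℤ → α) (R : ℕ) : Set (ℤ → α) := {x' | ∀ j : ℤ, |j| ≤ R → x' j = x j}

variable [TopologicalSpace α]

theorem exists_cylinder_subset {x : ℤ → α} {U : Set (ℤ → α)} (hU : U ∈ 𝓝 x) :
    ∃ R : ℕ, cylinder x R ⊆ U := by
  rw [nhds_pi, Filter.mem_pi'] at hU
  obtain ⟨I, t, ht, hIt⟩ := hU
  refine ⟨I.sup Int.natAbs, fun x' hx' => hIt fun j hj => ?_⟩
  have hjR : j.natAbs ≤ I.sup Int.natAbs := Finset.le_sup (f := Int.natAbs) hj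
  rw [hx' j (by rw [Int.abs_eq_natAbs]; exact_mod_cast hjR)]
  exact mem_of_mem_nhds (ht j)

theorem dense_of_forall_cylinder {s : Set (ℤ → α)}
    (h : ∀ x R, (cylinder x R ∩ s).Nonempty) : Dense s :=
  dense_iff_inter_open.2 fun _ hU ⟨x, hx⟩ =>
    let ⟨R, hR⟩ := exists_cylinder_subset (hU.mem_nhds hx)
    (h x R).mono (inter_subset_inter_left s hR)

variable [DiscreteTopology α]

theorem cylinder_mem_nhds (x : ℤ → α) (R : ℕ) : cylinder x R ∈ 𝓝 x := by
  have h : ∀ᶠ x' in 𝓝 x, ∀ j ∈ Finset.Icc (-(R : ℤ)) R, x' j = x j :=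
    (eventually_all_finset _).2 fun j _ =>
      (continuous_apply j).continuousAt.eventually_mem ((isOpen_discrete {x j}).mem_nhds rfl)
  filter_upwards [h] with x' hx' j hj using hx' j (Finset.mem_Icc.2 (abs_le.1 hj))

theorem isOpen_of_forall_cylinder_subset {s : Set (ℤ → α)}
    (h : ∀ x ∈ s, ∃ R, cylinder x R ⊆ s) : IsOpen s :=
  isOpen_iff_mem_nhds.2 fun x hx =>
    let ⟨R, hR⟩ := h x hx
    mem_of_superset (cylinder_mem_nhds x R) hR

theorem continuous_of_forall_cylinder {β : Type*} [TopologicalSpace β] [DiscreteTopology β]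
    {ψ : (ℤ → α) → β} (h : ∀ x, ∃ R, ∀ x' ∈ cylinder x R, ψ x' = ψ x) : Continuous ψ :=
  IsLocallyConstant.continuous <| (IsLocallyConstant.iff_eventually_eq ψ).2 fun x =>
    let ⟨R, hR⟩ := h x
    mem_of_superset (cylinder_mem_nhds x R) hR

end Cylinder

section Baire

variable {α : Type*} [TopologicalSpace α]

theorem dense_setOf_shift_ne [Nontrivial α] {s : ℤ} (hs : s ≠ 0) :
    Dense {x : ℤ → α | shift s x ≠ x} := by
  classical
  refine dense_of_forall_cylinder fun x R => ?_
  obtain ⟨a, ha⟩ := exists_ne (x (R + 1 - s))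
  refine ⟨Function.update x (R + 1) a, fun j hj => ?_, fun hfix => ha ?_⟩
  · rw [Function.update_of_ne (by rw [abs_le] at hj; omega)]
  · have := congrFun hfix (R + 1 - s)
    simp only [shift, sub_add_cancel, Function.update_self] at this
    rwa [Function.update_of_ne (by omega)] at this

theorem freePart_mem_residual : FreePart ∈ residual (ℤ → Bool) := by
  refine eventually_countable_forall.2 fun s => ?_
  rcases eq_or_ne s 0 with rfl | hs
  · exact univ_mem' fun _ h => absurd rfl h
  · filter_upwards [residual_of_dense_open (isOpen_ne_fun (continuous_shift s) continuous_id)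
      (dense_setOf_shift_ne hs)] with x hx _ using hx

def RecurrentWindow (R : ℕ) : Set (ℤ → α) :=
  {x | ∃ g h : ℕ, 0 < g ∧ 0 < h ∧ g.Coprime h ∧
    ∀ j : ℤ, |j| ≤ R → x (j + g) = x j ∧ x (j + h) = x j}

theorem dense_recurrentWindow (R : ℕ) : Dense (RecurrentWindow R : Set (ℤ → α)) := by
  refine dense_of_forall_cylinder fun x R' => ?_
  -- copies of the window `[-M, M]` are placed at `g` and `h = 2g + 1`, where they cannot overlap
  set M := R + R'
  set g := 2 * M + 1
  set h := 1 + 2 * g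
  let x' : ℤ → α := fun n => if n ≤ M then x n else if n ≤ g + M then x (n - g) else x (n - h)
  have hx'g : ∀ j : ℤ, |j| ≤ M → x' (j + g) = x j := by
    intro j hj
    rw [abs_le] at hj
    simp only [x', if_neg (show ¬ j + g ≤ M by omega), if_pos (show j + g ≤ g + M by omega),
      add_sub_cancel_right]
  have hx'h : ∀ j : ℤ, |j| ≤ M → x' (j + h) = x j := by
    intro j hj
    rw [abs_le] at hj
    simp only [x', if_neg (show ¬ j + h ≤ M by omega), if_neg (show ¬ j + h ≤ g + M by omega),
      add_sub_cancel_right]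
  have hx' : ∀ j : ℤ, |j| ≤ M → x' j = x j := fun j hj => if_pos (abs_le.1 hj).2
  refine ⟨x', fun j hj => hx' j (hj.trans (by omega)), g, h, by omega, by omega,
    (Nat.coprime_add_mul_right_right g 1 2).2 (Nat.coprime_one_right g), fun j hj => ?_⟩
  have hjM : |j| ≤ M := hj.trans (by omega)
  rw [hx' j hjM]
  exact ⟨hx'g j hjM, hx'h j hjM⟩

variable [DiscreteTopology α]

theorem isOpen_recurrentWindow (R : ℕ) : IsOpen (RecurrentWindow R : Set (ℤ → α)) := by
  refine isOpen_of_forall_cylinder_subset fun x ⟨g, h, hg, hh, hco, hx⟩ =>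
    ⟨R + g + h, fun x' hx' => ⟨g, h, hg, hh, hco, fun j hj => ?_⟩⟩
  rw [abs_le] at hj
  rw [hx' j (by rw [abs_le]; omega), hx' (j + g) (by rw [abs_le]; omega),
    hx' (j + h) (by rw [abs_le]; omega)]
  exact hx j (abs_le.2 hj)

theorem iInter_recurrentWindow_mem_residual :
    (⋂ R, RecurrentWindow R : Set (ℤ → α)) ∈ residual (ℤ → α) :=
  countable_iInter_mem.2 fun R =>
    residual_of_dense_open (isOpen_recurrentWindow R) (dense_recurrentWindow R)

end Baire

theorem measurableSet_freePart : MeasurableSet FreePart := by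
  have : FreePart = ⋂ (s : ℤ) (_ : s ≠ 0), {x : ℤ → Bool | shift s x ≠ x} := by
    ext x
    simp [FreePart]
  rw [this]
  exact MeasurableSet.iInter fun s => MeasurableSet.iInter fun _ =>
    (isOpen_ne_fun (continuous_shift s) continuous_id).measurableSet

theorem exists_periodic_window_of_measurable {b : ℕ} {Y : Set (ℤ → Fin b)}
    {f : {x : ℤ → Bool // x ∈ FreePart} → {y : ℤ → Fin b // y ∈ Y}} (hf : Measurable f)
    (he : EquivariantOn Y f) (R : ℕ) :
    ∃ y ∈ Y, ∃ g h : ℕ, 0 < g ∧ 0 < h ∧ g.Coprime h ∧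
      ∀ j : ℤ, |j| ≤ R → y (j + g) = y j ∧ y (j + h) = y j := by
  let S : ℤ → Fin b → Set (ℤ → Bool) := fun t c => Subtype.val '' {x | (f x).1 t = c}
  have hS : ∀ t c, MeasurableSet (S t c) := fun t c =>
    measurableSet_freePart.subtype_image
      ((measurable_pi_apply t).comp (measurable_subtype_coe.comp hf) (measurableSet_singleton c))
  choose U hUo hSU using fun t c => (hS t c).residualEq_isOpen
  obtain ⟨x₀, hx₀F, hx₀S, hx₀R⟩ : ∃ x₀ ∈ FreePart,
      (∀ (s t : ℤ) (c : Fin b), shift s x₀ ∈ S t c ↔ shift s x₀ ∈ U t c) ∧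
      x₀ ∈ ⋂ R', RecurrentWindow R' := by
    refine (dense_of_mem_residual (Eventually.and freePart_mem_residual (Eventually.and ?_
      iInter_recurrentWindow_mem_residual))).nonempty
    exact eventually_countable_forall.2 fun s => eventually_countable_forall.2 fun t =>
      eventually_countable_forall.2 fun c => (eventuallyEq_set.1 (hSU t c)).comp_shift s
  set y := (f ⟨x₀, hx₀F⟩).1
  have hx₀U : x₀ ∈ ⋂ t ∈ Finset.Icc (-(R : ℤ)) R, U t (y t) := by
    refine mem_iInter₂.2 fun t _ => ?_
    have h0 := hx₀S 0 t (y t)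
    rw [shift_zero] at h0
    exact h0.1 ⟨_, rfl, rfl⟩
  obtain ⟨R', hR'⟩ := exists_cylinder_subset
    ((isOpen_biInter_finset fun t _ => hUo t (y t)).mem_nhds hx₀U)
  have hperiod : ∀ p : ℕ, (∀ j : ℤ, |j| ≤ R' → x₀ (j + p) = x₀ j) →
      ∀ t : ℤ, |t| ≤ R → y (t + p) = y t := by
    intro p hp t ht
    obtain ⟨x', hx't, hx'⟩ := (hx₀S p t (y t)).2
      (mem_iInter₂.1 (hR' hp) t (Finset.mem_Icc.2 (abs_le.1 ht)))
    obtain rfl : x' = ⟨shift p x₀, shift_mem_freePart hx₀F p⟩ := Subtype.ext hx'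
    rw [← hx't, he ⟨x₀, hx₀F⟩ p]
    rfl
  obtain ⟨g, h, hg, hh, hco, hgh⟩ := mem_iInter.1 hx₀R R'
  exact ⟨y, (f _).2, g, h, hg, hh, hco, fun t ht =>
    ⟨hperiod g (fun j hj => (hgh j hj).1) t ht, hperiod h (fun j hj => (hgh j hj).2) t ht⟩⟩

section Markers

open TopologicalSpace

theorem exists_clopen_basis_seq :
    ∃ σ : ℕ → Set (ℤ → Bool), (∀ n, IsClopen (σ n)) ∧ IsTopologicalBasis (range σ) := by
  obtain ⟨s, hs, hsc, hbasis⟩ := (isTopologicalBasis_isClopen (X := ℤ → Bool)).exists_countable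
  obtain ⟨t, ht, -⟩ := hbasis.exists_subset_of_mem_open (mem_univ fun _ => true) isOpen_univ
  obtain ⟨σ, rfl⟩ := hsc.exists_eq_range ⟨t, ht⟩
  exact ⟨σ, fun n => hs (mem_range_self n), hbasis⟩

def clopenBasisSeq : ℕ → Set (ℤ → Bool) := exists_clopen_basis_seq.choose

theorem isClopen_clopenBasisSeq (n : ℕ) : IsClopen (clopenBasisSeq n) :=
  exists_clopen_basis_seq.choose_spec.1 n

theorem isTopologicalBasis_clopenBasisSeq : IsTopologicalBasis (range clopenBasisSeq) :=
  exists_clopen_basis_seq.choose_spec.2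

/-- Markers are chosen greedily along an enumeration of a clopen basis. -/
def IsMarkerOfRank (K : ℕ) : ℕ → (ℤ → Bool) → Prop
  | n, x => (x ∈ clopenBasisSeq n ∧ ∀ i : ℤ, i ≠ 0 → |i| ≤ K → shift i x ∉ clopenBasisSeq n) ∧
      ∀ m < n, ∀ i : ℤ, |i| ≤ K → ¬ IsMarkerOfRank K m (shift i x)

def IsMarker (K : ℕ) (x : ℤ → Bool) : Prop := ∃ n, IsMarkerOfRank K n x

variable {K : ℕ}

theorem isMarkerOfRank_iff {n : ℕ} {x : ℤ → Bool} : IsMarkerOfRank K n x ↔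
    (x ∈ clopenBasisSeq n ∧ ∀ i : ℤ, i ≠ 0 → |i| ≤ K → shift i x ∉ clopenBasisSeq n) ∧
      ∀ m < n, ∀ i : ℤ, |i| ≤ K → ¬ IsMarkerOfRank K m (shift i x) := by
  rw [IsMarkerOfRank]

theorem isClopen_setOf_isMarkerOfRank (K n : ℕ) : IsClopen {x | IsMarkerOfRank K n x} := by
  induction n using Nat.strong_induction_on with
  | _ n ih =>
  have : {x | IsMarkerOfRank K n x} = (clopenBasisSeq n ∩
      ⋂ i ∈ (Finset.Icc (-(K : ℤ)) K).erase 0, shift i ⁻¹' (clopenBasisSeq n)ᶜ) ∩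
      ⋂ m ∈ Finset.range n, ⋂ i ∈ Finset.Icc (-(K : ℤ)) K,
        shift i ⁻¹' {x | IsMarkerOfRank K m x}ᶜ := by
    ext x
    rw [mem_ofPred_eq, isMarkerOfRank_iff]
    simp only [abs_le, mem_inter_iff, mem_iInter, mem_preimage, mem_compl_iff, mem_ofPred_eq,
      Finset.mem_erase, Finset.mem_Icc, Finset.mem_range]
    grind
  rw [this]
  exact ((isClopen_clopenBasisSeq n).inter (isClopen_biInter_finset fun i _ =>
    (isClopen_clopenBasisSeq n).compl.preimage (continuous_shift i))).inter
    (isClopen_biInter_finset fun m hm => isClopen_biInter_finset fun i _ =>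
      (ih m (Finset.mem_range.1 hm)).compl.preimage (continuous_shift i))

theorem not_isMarker_shift {x : ℤ → Bool} (hx : IsMarker K x) {i : ℤ} (hi : i ≠ 0)
    (hiK : |i| ≤ K) : ¬ IsMarker K (shift i x) := by
  rintro ⟨m, hm⟩
  obtain ⟨n, hn⟩ := hx
  rcases lt_trichotomy m n with hmn | rfl | hnm
  · exact (isMarkerOfRank_iff.1 hn).2 m hmn i hiK hm
  · exact (isMarkerOfRank_iff.1 hn).1.2 i hi hiK (isMarkerOfRank_iff.1 hm).1.1
  · refine (isMarkerOfRank_iff.1 hm).2 n hnm (-i) (by rwa [abs_neg]) ?_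
    rwa [shift_shift, add_neg_cancel, shift_zero]

theorem exists_isMarker_shift {x : ℤ → Bool} (hx : x ∈ FreePart) :
    ∃ i : ℤ, |i| ≤ K ∧ IsMarker K (shift i x) := by
  have hV : IsOpen (⋂ i ∈ (Finset.Icc (-(K : ℤ)) K).erase 0, {shift i x}ᶜ) :=
    isOpen_biInter_finset fun _ _ => isOpen_compl_singleton
  obtain ⟨_, ⟨n, rfl⟩, hxn, hnV⟩ := isTopologicalBasis_clopenBasisSeq.exists_subset_of_mem_open
    (mem_iInter₂.2 fun i hi => mem_compl_singleton_iff.2 fun h =>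
      hx i (Finset.ne_of_mem_erase hi) h.symm) hV
  have hiso : ∀ i : ℤ, i ≠ 0 → |i| ≤ K → shift i x ∉ clopenBasisSeq n := by
    intro i hi hiK hxi
    have := mem_iInter₂.1 (hnV hxi) i (Finset.mem_erase.2 ⟨hi, Finset.mem_Icc.2 (abs_le.1 hiK)⟩)
    exact this rfl
  by_contra! hno
  have hx0 := hno 0 (by simp)
  rw [shift_zero] at hx0
  exact hx0 ⟨n, isMarkerOfRank_iff.2 ⟨⟨hxn, hiso⟩, fun m _ i hiK hm => hno i hiK ⟨m, hm⟩⟩⟩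

theorem isMarker_iff_forall_not_isMarker_shift {x : ℤ → Bool} (hx : x ∈ FreePart) :
    IsMarker K x ↔ ∀ i : ℤ, i ≠ 0 → |i| ≤ K → ¬ IsMarker K (shift i x) := by
  refine ⟨fun h i hi hiK => not_isMarker_shift h hi hiK, fun h => ?_⟩
  obtain ⟨i, hiK, hi⟩ := exists_isMarker_shift (K := K) hx
  obtain rfl : i = 0 := by_contra fun h0 => h i h0 hiK hi
  simpa using hi

theorem isOpen_setOf_isMarker (K : ℕ) : IsOpen {x | IsMarker K x} := by
  simp only [IsMarker, ofPred_exists]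
  exact isOpen_iUnion fun n => (isClopen_setOf_isMarkerOfRank K n).isOpen

end Markers

section MarkerSequence

structure IsMarking (K D : ℕ) (μ : ℤ → Bool) : Prop where
  separated : ∀ i j : ℤ, μ i → μ j → i < j → i + K < j
  syndetic : ∀ n : ℤ, ∃ i : ℤ, n - D ≤ i ∧ i ≤ n ∧ μ i

theorem IsMarking.comp_shift {K D : ℕ} {μ : ℤ → Bool} (hμ : IsMarking K D μ) (s : ℤ) :
    IsMarking K D (shift s μ) where
  separated i j hi hj hij := by linarith [hμ.separated (i + s) (j + s) hi hj (by omega)]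
  syndetic n := by
    obtain ⟨i, h1, h2, hi⟩ := hμ.syndetic (n + s)
    exact ⟨i - s, by omega, by omega, by simpa [shift] using hi⟩

open Classical in
noncomputable def markers (K : ℕ) (x : ℤ → Bool) : ℤ → Bool := fun i => IsMarker K (shift i x)

variable {K : ℕ}

theorem markers_shift (x : ℤ → Bool) (s : ℤ) : markers K (shift s x) = shift s (markers K x) := by
  funext i
  simp only [markers]
  rw [shift_shift, add_comm]
  rfl

theorem isMarking_markers {x : ℤ → Bool} (hx : x ∈ FreePart) :
    IsMarking K (2 * K) (markers K x) where
  separated i j hi hj hij := by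
    simp only [markers, decide_eq_true_eq] at hi hj
    by_contra! hji
    refine not_isMarker_shift hi (i := j - i) (by omega) (by rw [abs_le]; omega) ?_
    rwa [shift_shift, add_sub_cancel]
  syndetic n := by
    obtain ⟨i, hiK, hi⟩ := exists_isMarker_shift (K := K) (shift_mem_freePart hx (n - K))
    rw [shift_shift] at hi
    rw [abs_le] at hiK
    exact ⟨n - K + i, by omega, by omega, by simpa [markers] using hi⟩

theorem continuous_markers : Continuous fun x : {x // x ∈ FreePart} => markers K x.1 := by
  have hopen : ∀ i, IsOpen {x : {x // x ∈ FreePart} | IsMarker K (shift i x.1)} := fun i =>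
    (isOpen_setOf_isMarker K).preimage ((continuous_shift i).comp continuous_subtype_val)
  refine continuous_pi fun i => continuous_discrete_rng.2 fun b => ?_
  cases b
  · have : (fun x : {x // x ∈ FreePart} => markers K x.1 i) ⁻¹' {false} =
        ⋃ j ∈ (Finset.Icc (-(K : ℤ)) K).erase 0,
          {x : {x // x ∈ FreePart} | IsMarker K (shift (i + j) x.1)} := by
      ext x
      simp [markers, isMarker_iff_forall_not_isMarker_shift (shift_mem_freePart x.2 i),
        shift_shift, abs_le, and_assoc]
    rw [this]
    exact isOpen_biUnion fun j _ => hopen (i + j)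
  · convert hopen i using 1
    ext x
    simp [markers]

end MarkerSequence

section Tiling

/-- The phase of a position is its offset in its tile; tiles have length `g` or `h`. -/
def PhaseStep (g h u v : ℕ) : Prop := v = u + 1 ∨ v = 0 ∧ (u + 1 = g ∨ u + 1 = h)

variable {g h : ℕ}

theorem apply_phase_add {β : Type*} {L : ℕ} {y : ℤ → β}
    (hy : ∀ j : ℕ, j < L → y (j + g) = y j ∧ y (j + h) = y j)
    {φ : ℤ → ℕ} (hφ : ∀ n, PhaseStep g h (φ n) (φ (n + 1))) (n : ℤ) {t : ℕ} (ht : t < L) :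
    y (φ (n + t)) = y (φ n + t) := by
  induction t generalizing n with
  | zero => simp
  | succ t ih =>
    rw [show n + ↑(t + 1) = n + 1 + t by push_cast; ring, ih (n + 1) (by omega)]
    rcases hφ n with hstep | ⟨hzero, hlen | hlen⟩
    · rw [hstep]
      push_cast
      ring_nf
    · rw [hzero, Nat.cast_zero, zero_add, ← (hy t (by omega)).1, ← hlen]
      push_cast
      ring_nf
    · rw [hzero, Nat.cast_zero, zero_add, ← (hy t (by omega)).2, ← hlen]
      push_cast
      ring_nf

theorem comp_mem_SFT_of_phaseStep {b L k : ℕ} {P : Fin k → Fin L → Fin b} {y : ℤ → Fin b}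
    (hy : y ∈ SFT P) (hper : ∀ j : ℕ, j < L → y (j + g) = y j ∧ y (j + h) = y j)
    {φ : ℤ → ℕ} (hφ : ∀ n, PhaseStep g h (φ n) (φ (n + 1))) : (fun n => y (φ n)) ∈ SFT P := by
  rintro j ⟨m, hm⟩
  exact hy j ⟨φ m, fun i => by rw [← apply_phase_add hper hφ m i.2]; exact hm i⟩

theorem phaseStep_mod {q : ℕ} (hq : q = g ∨ q = h) (hq0 : 0 < q) (e : ℕ) :
    PhaseStep g h (e % q) ((e + 1) % q) := by
  have hlt := Nat.mod_lt e hq0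
  have hdiv := Nat.div_add_mod' e q
  rcases Nat.lt_or_ge (e % q + 1) q with hsucc | hsucc
  · left
    rw [show e + 1 = e / q * q + (e % q + 1) by omega, Nat.mul_add_mod_of_lt hsucc]
  · right
    refine ⟨?_, by rcases hq with rfl | rfl <;> omega⟩
    rw [show e + 1 = (e / q + 1) * q by rw [Nat.add_one_mul]; omega, Nat.mul_mod_left]

/-- The phase at offset `e` in a gap tiled by `a` tiles of length `g` followed by tiles of
length `h`. -/
def tilePhase (g h a e : ℕ) : ℕ := if e < a * g then e % g else (e - a * g) % h

theorem tilePhase_zero (a : ℕ) : tilePhase g h a 0 = 0 := by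
  simp [tilePhase]

variable (hg : 0 < g) (hh : 0 < h) {a c : ℕ}
include hg hh

theorem phaseStep_tilePhase {e : ℕ} (he : e + 1 < a * g + c * h) :
    PhaseStep g h (tilePhase g h a e) (tilePhase g h a (e + 1)) := by
  unfold tilePhase
  by_cases h1 : e + 1 < a * g
  · rw [if_pos (by omega), if_pos h1]
    exact phaseStep_mod (Or.inl rfl) hg e
  by_cases h2 : e < a * g
  · have ha : a ≠ 0 := by rintro rfl; simp at h2
    obtain ⟨a, rfl⟩ := Nat.exists_eq_add_one.2 (Nat.pos_of_ne_zero ha)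
    have : e = a * g + (g - 1) := by rw [Nat.add_one_mul] at h1 h2; omega
    rw [if_pos h2, if_neg h1, this, Nat.mul_add_mod_of_lt (by omega), Nat.add_one_mul,
      show a * g + (g - 1) + 1 - (a * g + g) = 0 by omega]
    exact Or.inr ⟨Nat.zero_mod h, Or.inl (by omega)⟩
  · rw [if_neg h2, if_neg h1, Nat.sub_add_comm (by omega)]
    exact phaseStep_mod (Or.inr rfl) hh (e - a * g)

theorem phaseStep_tilePhase_last {e : ℕ} (he : e + 1 = a * g + c * h) :
    PhaseStep g h (tilePhase g h a e) 0 := by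
  refine Or.inr ⟨rfl, ?_⟩
  unfold tilePhase
  rcases Nat.eq_zero_or_pos c with rfl | hc
  · have ha : a ≠ 0 := by rintro rfl; simp at he
    obtain ⟨a, rfl⟩ := Nat.exists_eq_add_one.2 (Nat.pos_of_ne_zero ha)
    rw [zero_mul, add_zero, Nat.add_one_mul] at he
    rw [if_pos (by rw [Nat.add_one_mul]; omega), show e = a * g + (g - 1) by omega,
      Nat.mul_add_mod_of_lt (by omega)]
    omega
  · obtain ⟨c, rfl⟩ := Nat.exists_eq_add_one.2 hc
    rw [Nat.add_one_mul] at he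
    rw [if_neg (by omega), show e - a * g = c * h + (h - 1) by omega,
      Nat.mul_add_mod_of_lt (by omega)]
    omega

end Tiling

section MarkerPhase

variable (D : ℕ)

-- Only a window of length `D` is searched, so that these depend on finitely many coordinates.
noncomputable def backDist (μ : ℤ → Bool) : ℕ := sInf {i : ℕ | i ≤ D ∧ μ (-i)}

noncomputable def fwdDist (μ : ℤ → Bool) : ℕ := sInf {i : ℕ | 0 < i ∧ i ≤ D + 1 ∧ μ i}

variable {K D} {μ : ℤ → Bool}

theorem IsMarking.isLeast_backDist (hμ : IsMarking K D μ) :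
    IsLeast {i : ℕ | i ≤ D ∧ μ (-i)} (backDist D μ) := by
  refine isLeast_csInf ?_
  obtain ⟨i, h1, h2, hi⟩ := hμ.syndetic 0
  exact ⟨(-i).toNat, by omega, by rwa [show -((-i).toNat : ℤ) = i by omega]⟩

theorem IsMarking.isLeast_fwdDist (hμ : IsMarking K D μ) :
    IsLeast {i : ℕ | 0 < i ∧ i ≤ D + 1 ∧ μ i} (fwdDist D μ) := by
  refine isLeast_csInf ?_
  obtain ⟨i, h1, h2, hi⟩ := hμ.syndetic (D + 1)
  exact ⟨i.toNat, by omega, by omega, by rwa [show (i.toNat : ℤ) = i by omega]⟩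

theorem IsMarking.backDist_shift_one (hμ : IsMarking K D μ) :
    backDist D (shift 1 μ) = if μ 1 then 0 else backDist D μ + 1 := by
  obtain ⟨⟨hbD, hb⟩, hbmin⟩ := hμ.isLeast_backDist
  obtain ⟨⟨hb'D, hb'⟩, hb'min⟩ := (hμ.comp_shift 1).isLeast_backDist
  simp only [shift] at hb' hb'min
  split_ifs with h1
  · exact Nat.eq_zero_of_le_zero (hb'min ⟨Nat.zero_le D, by simpa using h1⟩)
  · have hb'0 : backDist D (shift 1 μ) ≠ 0 := by rintro h; simp [h, h1] at hb'
    have hle : backDist D μ ≤ backDist D (shift 1 μ) - 1 :=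
      hbmin ⟨by omega, by rwa [Nat.cast_sub (by omega), Nat.cast_one, neg_sub, sub_eq_neg_add]⟩
    have hge : backDist D (shift 1 μ) ≤ backDist D μ + 1 :=
      hb'min ⟨by omega, by simpa using hb⟩
    omega

theorem IsMarking.fwdDist_eq_one (hμ : IsMarking K D μ) (h1 : μ 1) : fwdDist D μ = 1 :=
  le_antisymm (hμ.isLeast_fwdDist.2 ⟨one_pos, by omega, h1⟩) hμ.isLeast_fwdDist.1.1

theorem IsMarking.fwdDist_shift_one (hμ : IsMarking K D μ) (h1 : μ 1 = false) :
    fwdDist D (shift 1 μ) + 1 = fwdDist D μ := by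
  obtain ⟨⟨hf0, hfD, hf⟩, hfmin⟩ := hμ.isLeast_fwdDist
  obtain ⟨⟨hf'0, hf'D, hf'⟩, hf'min⟩ := (hμ.comp_shift 1).isLeast_fwdDist
  simp only [shift] at hf' hf'min
  have hf1 : fwdDist D μ ≠ 1 := by rintro h; simp [h, h1] at hf
  have hle : fwdDist D (shift 1 μ) ≤ fwdDist D μ - 1 :=
    hf'min ⟨by omega, by omega, by rwa [Nat.cast_sub (by omega), Nat.cast_one, sub_add_cancel]⟩
  have hge : fwdDist D μ ≤ fwdDist D (shift 1 μ) + 1 :=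
    hfmin ⟨by omega, by omega, by simpa using hf'⟩
  omega

theorem IsMarking.lt_backDist_add_fwdDist (hμ : IsMarking K D μ) :
    K < backDist D μ + fwdDist D μ := by
  have := hμ.separated _ _ hμ.isLeast_backDist.1.2 hμ.isLeast_fwdDist.1.2.2
    (by have := hμ.isLeast_fwdDist.1.1; omega)
  omega

theorem backDist_eq_of_mem_cylinder {μ' : ℤ → Bool} (h : μ' ∈ cylinder μ (D + 1)) :
    backDist D μ' = backDist D μ := by
  unfold backDist
  congr 1
  ext i
  simp only [mem_ofPred_eq, and_congr_right_iff]
  exact fun hi => by rw [h (-i) (by rw [abs_neg, Nat.abs_cast]; omega)]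

theorem fwdDist_eq_of_mem_cylinder {μ' : ℤ → Bool} (h : μ' ∈ cylinder μ (D + 1)) :
    fwdDist D μ' = fwdDist D μ := by
  unfold fwdDist
  congr 1
  ext i
  simp only [mem_ofPred_eq, and_congr_right_iff]
  exact fun _ hi => by rw [h i (by rw [Nat.abs_cast]; omega)]

end MarkerPhase

section Construction

variable {g h : ℕ}

open Classical in
/-- The number of tiles of length `g` in a tiling of a gap of length `G` by tiles of lengths `g`
and `h` (zero if there is none). -/
noncomputable def gTileCount (g h G : ℕ) : ℕ :=
  if hG : ∃ a c : ℕ, a * g + c * h = G then hG.choose else 0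

theorem exists_gTileCount (hco : g.Coprime h) {G : ℕ} (hG : g * h ≤ G) :
    ∃ c, gTileCount g h G * g + c * h = G := by
  have hG : ∃ a c : ℕ, a * g + c * h = G :=
    Nat.exists_add_mul_eq_of_gcd_dvd_of_mul_pred_le g h G (by rw [hco.gcd_eq_one]; exact one_dvd G)
      ((Nat.mul_le_mul (Nat.pred_le g) (Nat.pred_le h)).trans hG)
  rw [gTileCount, dif_pos hG]
  exact hG.choose_spec

/-- The phase of position `0` in the tiling of the gap between the surrounding markers of `μ`. -/
noncomputable def markerPhase (g h D : ℕ) (μ : ℤ → Bool) : ℕ :=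
  tilePhase g h (gTileCount g h (backDist D μ + fwdDist D μ)) (backDist D μ)

theorem IsMarking.phaseStep_markerPhase {K D : ℕ} {μ : ℤ → Bool} (hμ : IsMarking K D μ)
    (hg : 0 < g) (hh : 0 < h) (hco : g.Coprime h) (hK : g * h ≤ K) :
    PhaseStep g h (markerPhase g h D μ) (markerPhase g h D (shift 1 μ)) := by
  have hgap := hμ.lt_backDist_add_fwdDist
  unfold markerPhase
  rw [hμ.backDist_shift_one]
  set b := backDist D μ
  set G := b + fwdDist D μ
  obtain ⟨c, hc⟩ := exists_gTileCount hco (G := G) (by omega)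
  cases h1 : μ 1
  · have hf := hμ.fwdDist_shift_one h1
    have hf' := (hμ.comp_shift 1).isLeast_fwdDist.1.1
    rw [if_neg (by simp), show b + 1 + fwdDist D (shift 1 μ) = G by omega]
    exact phaseStep_tilePhase hg hh (c := c) (by omega)
  · have hf := hμ.fwdDist_eq_one h1
    rw [if_pos rfl, tilePhase_zero]
    exact phaseStep_tilePhase_last hg hh (c := c) (by omega)

theorem continuous_markerPhase (g h D : ℕ) : Continuous (markerPhase g h D) :=
  continuous_of_forall_cylinder fun μ => ⟨D + 1, fun μ' hμ' => by
    rw [markerPhase, markerPhase, backDist_eq_of_mem_cylinder hμ', fwdDist_eq_of_mem_cylinder hμ']⟩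

end Construction

theorem exists_continuous_equivariant_of_periodic_window {b L k : ℕ}
    {P : Fin k → Fin L → Fin b} {y : ℤ → Fin b} (hy : y ∈ SFT P) {g h : ℕ} (hg : 0 < g)
    (hh : 0 < h) (hco : g.Coprime h) (hper : ∀ j : ℕ, j < L → y (j + g) = y j ∧ y (j + h) = y j) :
    ∃ f : {x : ℤ → Bool // x ∈ FreePart} → {y : ℤ → Fin b // y ∈ SFT P},
      Continuous f ∧ EquivariantOn (SFT P) f := by
  let φ : (ℤ → Bool) → ℤ → ℕ := fun x n =>
    markerPhase g h (2 * (g * h)) (shift n (markers (g * h) x))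
  refine ⟨fun x => ⟨fun n => y (φ x.1 n), comp_mem_SFT_of_phaseStep hy hper fun n => ?_⟩, ?_, ?_⟩
  · rw [show φ x.1 (n + 1) = markerPhase g h _ (shift 1 (shift n (markers (g * h) x.1))) by
      rw [shift_shift]]
    exact ((isMarking_markers x.2).comp_shift n).phaseStep_markerPhase hg hh hco le_rfl
  · refine (continuous_pi fun n => ?_).subtype_mk _
    exact (continuous_of_discreteTopology (f := fun i : ℕ => y i)).comp
      ((continuous_markerPhase g h _).comp ((continuous_shift n).comp continuous_markers))
  · intro x s _
    funext n
    simp only [φ, markers_shift, shift_shift]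
    rw [add_comm]
    rfl

theorem borel_iff_continuous_equivariant_map_general
    (b L k : ℕ) (P : Fin k → Fin L → Fin b) :
    (∃ f : {x : ℤ → Bool // x ∈ FreePart} → {y : ℤ → Fin b // y ∈ SFT P},
       Measurable f ∧ EquivariantOn (SFT P) f) ↔
    (∃ f : {x : ℤ → Bool // x ∈ FreePart} → {y : ℤ → Fin b // y ∈ SFT P},
       Continuous f ∧ EquivariantOn (SFT P) f) := by
  refine ⟨fun ⟨f, hf, he⟩ => ?_, fun ⟨f, hf, he⟩ => ⟨f, hf.measurable, he⟩⟩
  obtain ⟨y, hy, g, h, hg, hh, hco, hper⟩ := exists_periodic_window_of_measurable hf he L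
  exact exists_continuous_equivariant_of_periodic_window hy hg hh hco fun j hj =>
    hper j (by rw [Nat.abs_cast]; exact_mod_cast hj.le)

/-- For a subshift of finite type `Y ⊆ b^ℤ`, there is a Borel
equivariant map `F(2^ℤ) → Y` iff there is a continuous equivariant map `F(2^ℤ) → Y`. -/
theorem borel_iff_continuous_equivariant_map
    (b L k : ℕ) (hb : 1 ≤ b) (hL : 1 ≤ L) (P : Fin k → Fin L → Fin b) :
    (∃ f : {x : ℤ → Bool // x ∈ FreePart} → {y : ℤ → Fin b // y ∈ SFT P},
       Measurable f ∧ EquivariantOn (SFT P) f) ↔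
    (∃ f : {x : ℤ → Bool // x ∈ FreePart} → {y : ℤ → Fin b // y ∈ SFT P},
       Continuous f ∧ EquivariantOn (SFT P) f) :=
  borel_iff_continuous_equivariant_map_general b L k P
end

section
/- Let S = {±a_1,…,±a_n} where 0 < a_1 < … < a_n and gcd(a_1,…,a_n) = 1, let ℓ = a_n + 1, and let k = κ_S be the chromatic number of the core graph K_S. For any m ≥ ℓ, if c and c' are proper S-colorations of the integer interval {0, 1, …, ℓ+m−1} with values in Fin k, and c(i) = c'(i) for all 0 ≤ i < ℓ, then c = c'. -/
/-!
At a position `n ≥ ℓ` the points `n - v`, `v ∈ {0} ∪ A`, carry a copy of the core graph `K_S`,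
so any proper coloration restricted to them is a coloring of `K_S` with `κ_S` colors and hence
uses every color. So `c` takes the color `c' n` somewhere in that window; it cannot
do so at `n - a` with `a ∈ A`, where by induction `c` agrees with `c'` and `c'(n - a) ≠ c' n`,
so `c n = c' n`.
-/

/-- The core graph `K_S`: the simple graph on `{0} ∪ A` with an edge between `u` and
`v` iff `|u - v| ∈ A`. -/
def coreGraph (A : Finset ℕ) : SimpleGraph {x : ℕ // x ∈ insert 0 A} where
  Adj u v := u ≠ v ∧ ((u.1 : ℤ) - (v.1 : ℤ)).natAbs ∈ A
  symm := by
    constructor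
    rintro u v ⟨h1, h2⟩
    refine ⟨h1.symm, ?_⟩
    have h3 : ((v.1 : ℤ) - (u.1 : ℤ)).natAbs = ((u.1 : ℤ) - (v.1 : ℤ)).natAbs := by omega
    rwa [h3]
  loopless := by constructor; rintro u ⟨h1, _⟩; exact h1 rfl

open SimpleGraph

def IsProperColorationOn {α : Type*} (A : Finset ℕ) (L : ℤ) (c : ℤ → α) : Prop :=
  ∀ i j : ℤ, 0 ≤ i → i < L → 0 ≤ j → j < L → (i - j).natAbs ∈ A → c i ≠ c j

namespace IsProperColorationOn

variable {α : Type*} {A : Finset ℕ} {L : ℤ}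

def windowColoring {c : ℤ → α} (hc : IsProperColorationOn A L c) (n : ℤ)
    (hn : ∀ v ∈ insert 0 A, (v : ℤ) ≤ n) (hnL : n < L) : (coreGraph A).Coloring α :=
  Coloring.mk (fun v => c (n - v.1)) fun {u v} ⟨_, hadj⟩ => by
    have hu := hn u.1 u.2
    have hv := hn v.1 v.2
    refine hc _ _ (by omega) (by omega) (by omega) (by omega) ?_
    rwa [show n - u.1 - (n - v.1) = -((u.1 : ℤ) - v.1) by ring, Int.natAbs_neg]

theorem eq_of_eq_on_window {k : ℕ} (hk : (k : ℕ∞) ≤ (coreGraph A).chromaticNumber)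
    {c c' : ℤ → Fin k} (hc : IsProperColorationOn A L c) (hc' : IsProperColorationOn A L c')
    {n : ℤ} (hn : ∀ v ∈ insert 0 A, (v : ℤ) ≤ n) (hnL : n < L)
    (hprev : ∀ a ∈ A, c (n - a) = c' (n - a)) : c n = c' n := by
  obtain ⟨⟨v, hv⟩, hcv⟩ :=
    le_chromaticNumber_iff_forall_surjective.mp hk (hc.windowColoring n hn hnL) (c' n)
  change c (n - v) = c' n at hcv
  rcases Finset.mem_insert.mp hv with rfl | hvA
  · simpa using hcv
  · have hvn := hn v hv
    refine absurd (hprev v hvA ▸ hcv) (hc' _ _ (by omega) (by omega) (by omega) hnL ?_)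
    simpa using hvA

theorem eq_of_eq_on_initial_segment {k : ℕ} (hk : (k : ℕ∞) ≤ (coreGraph A).chromaticNumber)
    (hpos : ∀ a ∈ A, 0 < a) {N : ℕ} (hN : ∀ a ∈ A, a ≤ N)
    {c c' : ℤ → Fin k} (hc : IsProperColorationOn A L c) (hc' : IsProperColorationOn A L c')
    (hagree : ∀ i : ℤ, 0 ≤ i → i < N + 1 → c i = c' i) :
    ∀ i : ℤ, 0 ≤ i → i < L → c i = c' i := by
  intro i hi0 hiL
  lift i to ℕ using hi0
  induction i using Nat.strong_induction_on with
  | _ n ih =>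
    by_cases hsmall : n ≤ N
    · exact hagree n (by omega) (by omega)
    have hwindow : ∀ v ∈ insert 0 A, (v : ℤ) ≤ n :=
      (Finset.forall_mem_insert _ _ _).mpr ⟨by omega, fun v hv => by have := hN v hv; omega⟩
    refine eq_of_eq_on_window hk hc hc' hwindow hiL fun a ha => ?_
    have := hN a ha
    have := hpos a ha
    rw [show (n : ℤ) - a = ((n - a : ℕ) : ℤ) by omega]
    exact ih (n - a) (by omega) (by omega)

end IsProperColorationOn

theorem coloration_determined_by_initial_segment_general
    (A : Finset ℕ) (hA : A.Nonempty) (hpos : ∀ a ∈ A, 0 < a)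
    (k : ℕ) (hk : (k : ℕ∞) = (coreGraph A).chromaticNumber)
    (m : ℕ)
    (c c' : ℤ → Fin k)
    (hc : ∀ i j : ℤ, 0 ≤ i → i < (A.max' hA : ℤ) + 1 + m →
      0 ≤ j → j < (A.max' hA : ℤ) + 1 + m → (i - j).natAbs ∈ A → c i ≠ c j)
    (hc' : ∀ i j : ℤ, 0 ≤ i → i < (A.max' hA : ℤ) + 1 + m →
      0 ≤ j → j < (A.max' hA : ℤ) + 1 + m → (i - j).natAbs ∈ A → c' i ≠ c' j)
    (hagree : ∀ i : ℤ, 0 ≤ i → i < (A.max' hA : ℤ) + 1 → c i = c' i) :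
    ∀ i : ℤ, 0 ≤ i → i < (A.max' hA : ℤ) + 1 + m → c i = c' i :=
  IsProperColorationOn.eq_of_eq_on_initial_segment hk.le hpos (A.le_max' · ·) hc hc' hagree

/-- With `ℓ = aₙ + 1` and `k = κ_S` the chromatic number of the core
graph `K_S`: any proper `S`-coloration of the integer interval `{0, …, ℓ+m-1}` with `k`
colors (`m ≥ ℓ`) is determined by its restriction to `{0, …, ℓ-1}`. -/
theorem coloration_determined_by_initial_segment
    (A : Finset ℕ) (hA : A.Nonempty) (hpos : ∀ a ∈ A, 0 < a) (hgcd : A.gcd id = 1)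
    (k : ℕ) (hk : (k : ℕ∞) = (coreGraph A).chromaticNumber)
    (m : ℕ) (hm : A.max' hA + 1 ≤ m)
    (c c' : ℤ → Fin k)
    (hc : ∀ i j : ℤ, 0 ≤ i → i < (A.max' hA : ℤ) + 1 + m →
      0 ≤ j → j < (A.max' hA : ℤ) + 1 + m → (i - j).natAbs ∈ A → c i ≠ c j)
    (hc' : ∀ i j : ℤ, 0 ≤ i → i < (A.max' hA : ℤ) + 1 + m →
      0 ≤ j → j < (A.max' hA : ℤ) + 1 + m → (i - j).natAbs ∈ A → c' i ≠ c' j)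
    (hagree : ∀ i : ℤ, 0 ≤ i → i < (A.max' hA : ℤ) + 1 → c i = c' i) :
    ∀ i : ℤ, 0 ≤ i → i < (A.max' hA : ℤ) + 1 + m → c i = c' i :=
  coloration_determined_by_initial_segment_general A hA hpos k hk m c c' hc hc' hagree
end
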